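/- Let p ∈ (0,1], let X, Y, Z be p-Banach spaces, let u : X → Y be a linear isometry and let v : X → Z be a nonexpansive linear operator. Then there exist a p-Banach space W, a linear isometry u' : Z → W and a nonexpansive linear operator v' : Y → W such that v' (u x) = u' (v x) for every x ∈ X (the push-out property for p-Banach spaces: if the top arrow of a push-out square is an isometry and the left arrow is nonexpansive, the bottom arrow is an isometry). -/

import Mathlib

/- Common framework: p-normed and p-Banach spaces, following the paper's definitions. -/

namespace PGurarii

/-- A `p`-norm on a real vector space: `N x = 0 ↔ x = 0`, absolute homogeneity, and the
`p`-triangle inequality `N (x + y) ^ p ≤ N x ^ p + N y ^ p` (values in `ℝ₊`). -/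
structure PNorm (p : ℝ) (X : Type) [AddCommGroup X] [Module ℝ X] where
  N : X → ℝ
  nonneg : ∀ x : X, 0 ≤ N x
  eq_zero_iff : ∀ x : X, N x = 0 ↔ x = 0
  smul_eq : ∀ (a : ℝ) (x : X), N (a • x) = |a| * N x
  add_pow_le : ∀ x y : X, N (x + y) ^ p ≤ N x ^ p + N y ^ p

/-- Completeness (sequential) for the induced metric `d(x,y) = N (x - y) ^ p`. -/
def IsCompleteP (p : ℝ) {X : Type} [AddCommGroup X] [Module ℝ X] (NX : PNorm p X) : Prop :=
  ∀ u : ℕ → X,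
    (∀ ε : ℝ, 0 < ε → ∃ n₀ : ℕ, ∀ m ≥ n₀, ∀ n ≥ n₀, NX.N (u m - u n) ^ p < ε) →
    ∃ x : X, ∀ ε : ℝ, 0 < ε → ∃ n₀ : ℕ, ∀ n ≥ n₀, NX.N (u n - x) ^ p < ε

/-- Separability for the induced metric topology. -/
def IsSeparableP (p : ℝ) {X : Type} [AddCommGroup X] [Module ℝ X] (NX : PNorm p X) : Prop :=
  ∃ D : Set X, D.Countable ∧ ∀ x : X, ∀ ε : ℝ, 0 < ε → ∃ y ∈ D, NX.N (x - y) ^ p < ε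

/-- A subspace is closed for the induced metric topology. -/
def IsClosedSubP (p : ℝ) {X : Type} [AddCommGroup X] [Module ℝ X] (NX : PNorm p X)
    (S : Submodule ℝ X) : Prop :=
  ∀ x : X, (∀ ε : ℝ, 0 < ε → ∃ y ∈ S, NX.N (x - y) ^ p < ε) → x ∈ S

/-- The restriction of a `p`-norm to a subspace. -/
def PNorm.restrict {p : ℝ} {X : Type} [AddCommGroup X] [Module ℝ X]
    (NX : PNorm p X) (S : Submodule ℝ X) : PNorm p S where
  N x := NX.N x
  nonneg x := NX.nonneg x
  eq_zero_iff x := by rw [NX.eq_zero_iff]; exact ZeroMemClass.coe_eq_zero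
  smul_eq a x := NX.smul_eq a x
  add_pow_le x y := NX.add_pow_le x y

/-- A `p`-Banach space: a real vector space with a `p`-norm, complete for the induced metric. -/
structure PBanach (p : ℝ) where
  carrier : Type
  [addCommGroup : AddCommGroup carrier]
  [module : Module ℝ carrier]
  pnorm : PNorm p carrier
  complete : IsCompleteP p pnorm

attribute [instance] PBanach.addCommGroup PBanach.module

/-- `U` is of almost universal disposition for finite-dimensional `p`-Banach spaces: for every
`ε > 0`, every isometry from a subspace `X` of `U` (with the restricted `p`-norm) into a
finite-dimensional `p`-Banach space `Y` extends, after an `ε`-isometry `Y → U`, the inclusion. -/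
def AUD (p : ℝ) (U : Type) [AddCommGroup U] [Module ℝ U] (NU : PNorm p U) : Prop :=
  ∀ ε : ℝ, 0 < ε → ∀ Y : PBanach p, FiniteDimensional ℝ Y.carrier →
    ∀ (Xs : Submodule ℝ U) (g : Xs →ₗ[ℝ] Y.carrier),
      (∀ x : Xs, Y.pnorm.N (g x) = NU.N (x : U)) →
      ∃ f : Y.carrier →ₗ[ℝ] U,
        (∀ y, (1 - ε) * Y.pnorm.N y ≤ NU.N (f y) ∧ NU.N (f y) ≤ (1 + ε) * Y.pnorm.N y) ∧
        ∀ x : Xs, f (g x) = (x : U)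

/-- `U` is of universal disposition for separable `p`-Banach spaces. -/
def UD (p : ℝ) (U : Type) [AddCommGroup U] [Module ℝ U] (NU : PNorm p U) : Prop :=
  ∀ Y : PBanach p, IsSeparableP p Y.pnorm →
    ∀ (Xs : Submodule ℝ U), IsClosedSubP p NU Xs →
      ∀ g : Xs →ₗ[ℝ] Y.carrier, (∀ x : Xs, Y.pnorm.N (g x) = NU.N (x : U)) →
        ∃ f : Y.carrier →ₗ[ℝ] U, (∀ y, NU.N (f y) = Y.pnorm.N y) ∧ ∀ x : Xs, f (g x) = (x : U)

end PGurarii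

/-! The `p`-th power `N ^ p` of a `p`-norm is an additive group norm inducing the metric
`d(x, y) = N (x - y) ^ p`, and it is homogeneous of degree `p`. A `p`-Banach space is thus a
complete normed group whose norm is `p`-homogeneous, and the push-out is built as for Banach
spaces: `W` is the quotient of the `ℓ¹`-sum `Y ⊕₁ Z` by `{(u x, -v x)}`, with `u' = [(0, ·)]` and
`v' = [(·, 0)]`. Every representative of `[(0, z)]` has norm
`‖u x‖ + ‖z - v x‖ ≥ ‖v x‖ + ‖z - v x‖ ≥ ‖z‖`, so `u'` is an isometry; the subspace is closed
because `x ↦ (u x, -v x)` is bi-Lipschitz on the complete space `X`. -/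

namespace PGurarii

def RpowHomogeneousNorm (p : ℝ) (E : Type*) [SeminormedAddCommGroup E] [Module ℝ E] : Prop :=
  ∀ (a : ℝ) (x : E), ‖a • x‖ = |a| ^ p * ‖x‖

section RpowHomogeneousNorm

variable {p : ℝ} {E F : Type*} [SeminormedAddCommGroup E] [Module ℝ E]
  [SeminormedAddCommGroup F] [Module ℝ F]

lemma RpowHomogeneousNorm.withLp_prod (hE : RpowHomogeneousNorm p E)
    (hF : RpowHomogeneousNorm p F) : RpowHomogeneousNorm p (WithLp 1 (E × F)) := by
  intro a x
  rw [WithLp.prod_norm_eq_of_L1, WithLp.prod_norm_eq_of_L1, WithLp.smul_fst, WithLp.smul_snd,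
    hE, hF, mul_add]

lemma RpowHomogeneousNorm.quotient (hp : 0 < p) (hE : RpowHomogeneousNorm p E)
    (S : Submodule ℝ E) : RpowHomogeneousNorm p (E ⧸ S) := by
  have norm_smul_le : ∀ a : ℝ, a ≠ 0 → ∀ w : E ⧸ S, ‖a • w‖ ≤ |a| ^ p * ‖w‖ := by
    intro a ha w
    have hpos : 0 < |a| ^ p := Real.rpow_pos_of_pos (abs_pos.2 ha) p
    rw [← div_le_iff₀' hpos]
    refine QuotientAddGroup.le_norm_iff.2 ?_
    rintro m rfl
    rw [div_le_iff₀' hpos, ← hE]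
    exact Submodule.Quotient.norm_mk_le S (a • m)
  intro a w
  rcases eq_or_ne a 0 with rfl | ha
  · simp [Real.zero_rpow hp.ne']
  refine le_antisymm (norm_smul_le a ha w) ?_
  calc |a| ^ p * ‖w‖ = |a| ^ p * ‖a⁻¹ • a • w‖ := by rw [inv_smul_smul₀ ha]
    _ ≤ |a| ^ p * (|a⁻¹| ^ p * ‖a • w‖) := by gcongr; exact norm_smul_le _ (inv_ne_zero ha) _
    _ = ‖a • w‖ := by
      rw [abs_inv, Real.inv_rpow (abs_nonneg a), ← mul_assoc,
        mul_inv_cancel₀ (Real.rpow_pos_of_pos (abs_pos.2 ha) p).ne', one_mul]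

end RpowHomogeneousNorm

namespace PNorm

section AddCommGroup

variable {p : ℝ} {X : Type} [AddCommGroup X] [Module ℝ X]

lemma map_zero (NX : PNorm p X) : NX.N 0 = 0 :=
  (NX.eq_zero_iff 0).2 rfl

lemma map_neg (NX : PNorm p X) (x : X) : NX.N (-x) = NX.N x := by
  simpa using NX.smul_eq (-1) x

noncomputable def toAddGroupNorm (NX : PNorm p X) (hp : 0 < p) : AddGroupNorm X where
  toFun x := NX.N x ^ p
  map_zero' := by rw [NX.map_zero, Real.zero_rpow hp.ne']
  add_le' := NX.add_pow_le
  neg' x := by rw [NX.map_neg]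
  eq_zero_of_map_eq_zero' x hx :=
    (NX.eq_zero_iff x).1 ((Real.rpow_eq_zero (NX.nonneg x) hp.ne').1 hx)

noncomputable abbrev toNormedAddCommGroup (NX : PNorm p X) (hp : 0 < p) :
    NormedAddCommGroup X :=
  (NX.toAddGroupNorm hp).toNormedAddCommGroup

lemma rpowHomogeneousNorm (NX : PNorm p X) (hp : 0 < p) :
    letI := NX.toNormedAddCommGroup hp; RpowHomogeneousNorm p X := fun a x => by
  change NX.N (a • x) ^ p = |a| ^ p * NX.N x ^ p
  rw [NX.smul_eq, Real.mul_rpow (abs_nonneg a) (NX.nonneg x)]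

lemma eq_norm_rpow_inv (NX : PNorm p X) (hp : 0 < p) (x : X) :
    letI := NX.toNormedAddCommGroup hp; NX.N x = ‖x‖ ^ p⁻¹ :=
  (Real.rpow_rpow_inv (NX.nonneg x) hp.ne').symm

end AddCommGroup

section Normed

variable {p : ℝ} {E : Type} [NormedAddCommGroup E] [Module ℝ E]

lemma isCompleteP_iff_completeSpace (NE : PNorm p E) (h : ∀ x, NE.N x ^ p = ‖x‖) :
    IsCompleteP p NE ↔ CompleteSpace E := by
  simp_rw [IsCompleteP, h, ← dist_eq_norm, ← Metric.cauchySeq_iff, ← Metric.tendsto_atTop]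
  exact ⟨fun h => Metric.complete_of_cauchySeq_tendsto h,
    fun _ u hu => cauchySeq_tendsto_of_complete hu⟩

noncomputable def ofNorm (hp : 0 < p) (hE : RpowHomogeneousNorm p E) : PNorm p E where
  N x := ‖x‖ ^ p⁻¹
  nonneg x := by positivity
  eq_zero_iff x := by
    rw [Real.rpow_eq_zero (norm_nonneg x) (inv_ne_zero hp.ne'), norm_eq_zero]
  smul_eq a x := by
    rw [hE, Real.mul_rpow (by positivity) (norm_nonneg x),
      Real.rpow_rpow_inv (abs_nonneg a) hp.ne']
  add_pow_le x y := by
    simp only [Real.rpow_inv_rpow (norm_nonneg _) hp.ne']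
    exact norm_add_le x y

lemma ofNorm_pow (hp : 0 < p) (hE : RpowHomogeneousNorm p E) (x : E) :
    (ofNorm hp hE).N x ^ p = ‖x‖ :=
  Real.rpow_inv_rpow (norm_nonneg x) hp.ne'

end Normed

end PNorm

lemma PBanach.completeSpace {p : ℝ} (X : PBanach p) (hp : 0 < p) :
    letI := X.pnorm.toNormedAddCommGroup hp; CompleteSpace X.carrier :=
  letI := X.pnorm.toNormedAddCommGroup hp
  (X.pnorm.isCompleteP_iff_completeSpace fun _ => rfl).1 X.complete

noncomputable def PBanach.ofNorm {p : ℝ} (E : Type) [NormedAddCommGroup E] [Module ℝ E]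
    [CompleteSpace E] (hp : 0 < p) (hE : RpowHomogeneousNorm p E) : PBanach p where
  carrier := E
  pnorm := PNorm.ofNorm hp hE
  complete := (PNorm.isCompleteP_iff_completeSpace _ (PNorm.ofNorm_pow hp hE)).2 ‹_›

section Pushout

variable {R X Y Z : Type*} [Ring R]

section Algebraic

variable [AddCommGroup X] [Module R X] [AddCommGroup Y] [Module R Y] [AddCommGroup Z] [Module R Z]
  (u : X →ₗ[R] Y) (v : X →ₗ[R] Z)

def pushoutGraph : X →ₗ[R] WithLp 1 (Y × Z) :=
  (WithLp.linearEquiv 1 R (Y × Z)).symm.toLinearMap ∘ₗ u.prod (-v)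

abbrev Pushout : Type _ := WithLp 1 (Y × Z) ⧸ LinearMap.range (pushoutGraph u v)

def Pushout.inl : Y →ₗ[R] Pushout u v :=
  (LinearMap.range (pushoutGraph u v)).mkQ ∘ₗ
    (WithLp.linearEquiv 1 R (Y × Z)).symm.toLinearMap ∘ₗ LinearMap.inl R Y Z

def Pushout.inr : Z →ₗ[R] Pushout u v :=
  (LinearMap.range (pushoutGraph u v)).mkQ ∘ₗ
    (WithLp.linearEquiv 1 R (Y × Z)).symm.toLinearMap ∘ₗ LinearMap.inr R Y Z

lemma Pushout.condition_apply (x : X) : Pushout.inl u v (u x) = Pushout.inr u v (v x) := by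
  refine (Submodule.Quotient.eq _).2 ⟨x, ?_⟩
  refine WithLp.ofLp_injective 1 (Prod.ext ?_ ?_) <;> simp [pushoutGraph]

end Algebraic

section Seminormed

variable [AddCommGroup X] [Module R X] [SeminormedAddCommGroup Y] [Module R Y]
  [SeminormedAddCommGroup Z] [Module R Z] (u : X →ₗ[R] Y) (v : X →ₗ[R] Z)

lemma Pushout.norm_inl_le (y : Y) : ‖Pushout.inl u v y‖ ≤ ‖y‖ := by
  refine (Submodule.Quotient.norm_mk_le _ _).trans_eq ?_
  simp

lemma Pushout.norm_inr (h : ∀ x, ‖v x‖ ≤ ‖u x‖) (z : Z) : ‖Pushout.inr u v z‖ = ‖z‖ := by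
  refine le_antisymm ((Submodule.Quotient.norm_mk_le _ _).trans_eq ?_) ?_
  · simp
  refine QuotientAddGroup.le_norm_iff.2 ?_
  intro m hmz
  obtain ⟨x, hx⟩ := (Submodule.Quotient.eq _).1 hmz
  have hm : m = pushoutGraph u v x + WithLp.toLp 1 (0, z) := by rw [hx]; simp
  calc ‖z‖ ≤ ‖v x‖ + ‖z - v x‖ := norm_le_norm_add_norm_sub' z (v x)
    _ ≤ ‖u x‖ + ‖z - v x‖ := by gcongr; exact h x
    _ = ‖m‖ := by
      rw [WithLp.prod_norm_eq_of_L1, hm]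
      simp [pushoutGraph, neg_add_eq_sub]

end Seminormed

lemma isClosed_range_pushoutGraph [SeminormedAddCommGroup X] [Module R X] [CompleteSpace X]
    [NormedAddCommGroup Y] [Module R Y] [NormedAddCommGroup Z] [Module R Z]
    (u : X →ₗ[R] Y) (v : X →ₗ[R] Z) (hu : ∀ x, ‖u x‖ = ‖x‖) (hv : ∀ x, ‖v x‖ ≤ ‖x‖) :
    IsClosed (LinearMap.range (pushoutGraph u v) : Set (WithLp 1 (Y × Z))) := by
  have norm_graph : ∀ x, ‖pushoutGraph u v x‖ = ‖x‖ + ‖v x‖ := fun x => by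
    simp [pushoutGraph, WithLp.prod_norm_eq_of_L1, hu]
  have hanti : AntilipschitzWith 1 (pushoutGraph u v) :=
    AddMonoidHomClass.antilipschitz_of_bound _ fun x => by
      rw [norm_graph, NNReal.coe_one, one_mul]
      exact le_add_of_nonneg_right (norm_nonneg _)
  have hlip : LipschitzWith (Real.toNNReal 2) (pushoutGraph u v) :=
    AddMonoidHomClass.lipschitz_of_bound _ 2 fun x => by
      rw [norm_graph]
      linarith [hv x]
  rw [LinearMap.coe_range]
  exact hanti.isClosed_range hlip.uniformContinuous

end Pushout

theorem statement3_general (p : ℝ) (hp0 : 0 < p)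
    (X Y Z : PBanach p)
    (u : X.carrier →ₗ[ℝ] Y.carrier) (hu : ∀ x, Y.pnorm.N (u x) = X.pnorm.N x)
    (v : X.carrier →ₗ[ℝ] Z.carrier) (hv : ∀ x, Z.pnorm.N (v x) ≤ X.pnorm.N x) :
    ∃ (W : PBanach p) (u' : Z.carrier →ₗ[ℝ] W.carrier) (v' : Y.carrier →ₗ[ℝ] W.carrier),
      (∀ z, W.pnorm.N (u' z) = Z.pnorm.N z) ∧
      (∀ y, W.pnorm.N (v' y) ≤ Y.pnorm.N y) ∧
      ∀ x, v' (u x) = u' (v x) := by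
  let := X.pnorm.toNormedAddCommGroup hp0
  let := Y.pnorm.toNormedAddCommGroup hp0
  let := Z.pnorm.toNormedAddCommGroup hp0
  have := X.completeSpace hp0
  have := Y.completeSpace hp0
  have := Z.completeSpace hp0
  have hu' : ∀ x, ‖u x‖ = ‖x‖ := fun x => congrArg (· ^ p) (hu x)
  have hv' : ∀ x, ‖v x‖ ≤ ‖x‖ := fun x => Real.rpow_le_rpow (Z.pnorm.nonneg _) (hv x) hp0.le
  have := isClosed_range_pushoutGraph u v hu' hv'
  have hW : RpowHomogeneousNorm p (Pushout u v) :=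
    ((Y.pnorm.rpowHomogeneousNorm hp0).withLp_prod (Z.pnorm.rpowHomogeneousNorm hp0)).quotient
      hp0 _
  refine ⟨PBanach.ofNorm (Pushout u v) hp0 hW, Pushout.inr u v, Pushout.inl u v,
    fun z => ?_, fun y => ?_, Pushout.condition_apply u v⟩
  · change ‖Pushout.inr u v z‖ ^ p⁻¹ = _
    rw [Pushout.norm_inr u v fun x => (hv' x).trans_eq (hu' x).symm,
      Z.pnorm.eq_norm_rpow_inv hp0]
  · change ‖Pushout.inl u v y‖ ^ p⁻¹ ≤ _
    rw [Y.pnorm.eq_norm_rpow_inv hp0]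
    gcongr
    exact Pushout.norm_inl_le u v y

/-- the push-out property for `p`-Banach spaces: given an isometry `u : X → Y` and a
nonexpansive operator `v : X → Z`, there are a `p`-Banach space `W`, an isometry `u' : Z → W`
and a nonexpansive operator `v' : Y → W` with `v' ∘ u = u' ∘ v`. -/
theorem statement3 (p : ℝ) (hp0 : 0 < p) (hp1 : p ≤ 1)
    (X Y Z : PBanach p)
    (u : X.carrier →ₗ[ℝ] Y.carrier) (hu : ∀ x, Y.pnorm.N (u x) = X.pnorm.N x)
    (v : X.carrier →ₗ[ℝ] Z.carrier) (hv : ∀ x, Z.pnorm.N (v x) ≤ X.pnorm.N x) :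
    ∃ (W : PBanach p) (u' : Z.carrier →ₗ[ℝ] W.carrier) (v' : Y.carrier →ₗ[ℝ] W.carrier),
      (∀ z, W.pnorm.N (u' z) = Z.pnorm.N z) ∧
      (∀ y, W.pnorm.N (v' y) ≤ Y.pnorm.N y) ∧
      ∀ x, v' (u x) = u' (v x) :=
  statement3_general p hp0 X Y Z u hu v hv

end PGurarii
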